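/- Let r ≥ 1 and let V̂ : ℤ³ → ℝ satisfy V̂(k) = 0 for |k| > r, V̂(−k) = V̂(k), and V̂(0) = 0. There exists a constant C > 0, depending only on r and V̂, such that for every p_F > 0 and every f : ℤ³ → ℝ with 0 ≤ f ≤ 1 and ∑_{p∈ℤ³} f(p) < ∞, one has sup_{p∈ℤ³} |𝒬[f](p)| ≤ C·∑_{p∈ℤ³} f(p). -/

import Mathlib

open Real

/-- The Euclidean norm of a lattice point in `ℤ^d`. -/
noncomputable def zNorm {d : ℕ} (p : Fin d → ℤ) : ℝ := Real.sqrt (∑ i, ((p i : ℝ)) ^ 2)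

/-- The indicator `χ` of the Fermi ball of radius `p_F`. -/
noncomputable def chi {d : ℕ} (pF : ℝ) (p : Fin d → ℤ) : ℝ := if zNorm p ≤ pF then 1 else 0

/-- The indicator `χ^⊥ = 1 − χ` of the complement of the Fermi ball. -/
noncomputable def chiP {d : ℕ} (pF : ℝ) (p : Fin d → ℤ) : ℝ := 1 - chi pF p

/-- The collision kernel `σ(p₁,p₂,p₃,p₄)`. -/
noncomputable def collisionKernel {d : ℕ} (pF : ℝ) (Vh : (Fin d → ℤ) → ℝ)
    (p₁ p₂ p₃ p₄ : Fin d → ℤ) : ℝ :=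
  (if p₁ + p₂ = p₃ + p₄ then 1 else 0) *
      (chi pF p₁ * chi pF p₂ * chi pF p₃ * chi pF p₄
        + chiP pF p₁ * chiP pF p₂ * chiP pF p₃ * chiP pF p₄) *
      (Vh (p₁ - p₄) - Vh (p₁ - p₃)) ^ 2
    + 2 * (if p₁ - p₂ = p₃ - p₄ then 1 else 0) *
      (chi pF p₁ * chi pF p₃ * chiP pF p₂ * chiP pF p₄
        + chiP pF p₁ * chiP pF p₃ * chi pF p₂ * chi pF p₄) *
      (Vh (p₁ - p₃)) ^ 2

/-- The signed free dispersion `e(q) = (χ^⊥(q) − χ(q))·|q|²/2`. -/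
noncomputable def freeDisp {d : ℕ} (pF : ℝ) (q : Fin d → ℤ) : ℝ :=
  (chiP pF q - chi pF q) * (zNorm q) ^ 2 / 2

/-- The limiting quantum Boltzmann collision operator `𝒬` on `ℤ³`. -/
noncomputable def Qop (pF : ℝ) (Vh f : (Fin 3 → ℤ) → ℝ) (p : Fin 3 → ℤ) : ℝ :=
  4 * π * ((2 * π) ^ 9)⁻¹ *
    ∑' (p₂ : Fin 3 → ℤ) (p₃ : Fin 3 → ℤ) (p₄ : Fin 3 → ℤ),
      collisionKernel pF Vh p p₂ p₃ p₄ * (1 / (2 * π)) *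
        (if freeDisp pF p + freeDisp pF p₂ - freeDisp pF p₃ - freeDisp pF p₄ = 0
          then 1 else 0) *
        (f p₃ * f p₄ * (1 - f p) * (1 - f p₂) - f p * f p₂ * (1 - f p₃) * (1 - f p₄))

/-!
With `B ⊇ supp V̂` finite and `M = ∑ V̂²`, the kernel `σ(p, p₂, p₃, p₄)` is at most `4M` times the
indicators of momentum conservation combined with `p - p₄ ∈ B` or `p - p₃ ∈ B`, while the energy
delta and the factor `1/(2π)` are at most one and the Pauli-blocked bracket `gain - loss` is at most
`f(p₂) + min (f(p₃)) (f(p₄))`. On a momentum-conservation surface a triple `(p₂, p₃, p₄)` is fixed by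
the momentum transfer `k ∈ B` and one free momentum `q`, so each of the three resulting majorants
sums to `2|B| ∑ f`.
-/

lemma prod4_mem_unitInterval {a b c d : ℝ} (ha : a ∈ unitInterval) (hb : b ∈ unitInterval)
    (hc : c ∈ unitInterval) (hd : d ∈ unitInterval) : a * b * c * d ∈ unitInterval :=
  unitInterval.mul_mem (unitInterval.mul_mem (unitInterval.mul_mem ha hb) hc) hd

lemma abs_gain_sub_loss_le {a b c d : ℝ} (ha : a ∈ unitInterval) (hb : b ∈ unitInterval)
    (hc : c ∈ unitInterval) (hd : d ∈ unitInterval) :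
    |c * d * (1 - a) * (1 - b) - a * b * (1 - c) * (1 - d)| ≤ min c d + b := by
  obtain ⟨ha0, ha1⟩ := ha; obtain ⟨hb0, hb1⟩ := hb
  obtain ⟨hc0, hc1⟩ := hc; obtain ⟨hd0, hd1⟩ := hd
  have gain_le : c * d * (1 - a) * (1 - b) ≤ min c d := by
    refine le_min ?_ ?_ <;>
      nlinarith [mul_nonneg hc0 hd0, mul_nonneg (mul_nonneg hc0 hd0) (sub_nonneg.2 ha1)]
  have loss_le : a * b * (1 - c) * (1 - d) ≤ b := by
    nlinarith [mul_nonneg ha0 hb0, mul_nonneg (mul_nonneg ha0 hb0) (sub_nonneg.2 hc1)]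
  have gain_nonneg : 0 ≤ c * d * (1 - a) * (1 - b) := by
    have := sub_nonneg.2 ha1; have := sub_nonneg.2 hb1; positivity
  have loss_nonneg : 0 ≤ a * b * (1 - c) * (1 - d) := by
    have := sub_nonneg.2 hc1; have := sub_nonneg.2 hd1; positivity
  rw [abs_le]; constructor <;> linarith

theorem Summable.tsum_tsum_tsum {α β γ E : Type*} [AddCommGroup E] [UniformSpace E]
    [IsUniformAddGroup E] [CompleteSpace E] [T0Space E] {F : α × β × γ → E} (hF : Summable F) :
    ∑' x, F x = ∑' (a) (b) (c), F (a, b, c) := by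
  rw [hF.tsum_prod]
  exact tsum_congr fun a => (hF.prod_factor a).tsum_prod

section TransferMajorant

variable {α : Type*} [AddCommGroup α] [DecidableEq α]

def transferMajorant (B : Finset α) (f : α → ℝ) (p a b c : α) : ℝ :=
  if p + a = b + c ∧ p - c ∈ B then f a + f b else 0

lemma hasSum_ite_mem_add_translate (B : Finset α) {f : α → ℝ} (hf0 : ∀ q, 0 ≤ f q)
    (hf : Summable f) :
    HasSum (fun y : α × α => if y.1 ∈ B then f y.2 + f (y.2 + y.1) else 0)
      (2 * B.card * ∑' q, f q) := by
  set g : α × α → ℝ := fun y => if y.1 ∈ B then f y.2 + f (y.2 + y.1) else 0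
  have hslice (k : α) : HasSum (fun q => g (k, q)) (if k ∈ B then 2 * ∑' q, f q else 0) := by
    by_cases hk : k ∈ B
    · simp only [g, hk, if_true, two_mul]
      exact hf.hasSum.add ((Equiv.addRight k).hasSum_iff.2 hf.hasSum)
    · simp only [g, hk, if_false]
      exact hasSum_zero
  have hsum : Summable g := by
    refine (summable_prod_of_nonneg fun y => ?_).2 ⟨fun k => (hslice k).summable, ?_⟩
    · simp only [g]; split_ifs <;> [exact add_nonneg (hf0 _) (hf0 _); exact le_rfl]
    · simp only [(hslice _).tsum_eq]
      exact summable_of_ne_finset_zero (s := B) fun k hk => if_neg hk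
  convert hsum.hasSum using 1
  rw [hsum.tsum_prod, tsum_congr fun k => (hslice k).tsum_eq,
    tsum_eq_sum (s := B) fun k hk => if_neg hk, Finset.sum_ite_of_true fun _ h => h,
    Finset.sum_const, nsmul_eq_mul]
  ring

lemma hasSum_transferMajorant (B : Finset α) {f : α → ℝ} (hf0 : ∀ q, 0 ≤ f q) (hf : Summable f)
    (p : α) :
    HasSum (fun x : α × α × α => transferMajorant B f p x.1 x.2.1 x.2.2)
      (2 * B.card * ∑' q, f q) := by
  set e : α × α → α × α × α := fun y => (y.2, y.2 + y.1, p - y.1)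
  have he : Function.Injective e := by
    intro y z h
    simp only [e, Prod.mk.injEq, sub_right_inj] at h
    exact Prod.ext h.2.2 h.1
  rw [← he.hasSum_iff]
  · convert hasSum_ite_mem_add_translate B hf0 hf using 1
    funext ⟨k, q⟩
    have hres : p + q = q + k + (p - k) := by abel
    simp only [Function.comp, e, transferMajorant, hres, sub_sub_cancel, true_and]
  · rintro ⟨a, b, c⟩ hx
    simp only [transferMajorant]
    refine if_neg fun h => hx ⟨(p - c, a), ?_⟩
    have hb : a + (p - c) = b := by
      rw [← add_sub_assoc, add_comm a p, h.1, add_sub_cancel_right]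
    simp only [e, hb, sub_sub_cancel]

end TransferMajorant

lemma abs_le_zNorm {d : ℕ} (p : Fin d → ℤ) (i : Fin d) : |(p i : ℝ)| ≤ zNorm p := by
  rw [zNorm, ← Real.sqrt_sq_eq_abs]
  exact Real.sqrt_le_sqrt
    (Finset.single_le_sum (fun j _ => sq_nonneg ((p j : ℝ))) (Finset.mem_univ i))

lemma finite_setOf_zNorm_le (d : ℕ) (r : ℝ) : {p : Fin d → ℤ | zNorm p ≤ r}.Finite := by
  refine (Set.finite_Icc (fun _ => -⌈r⌉) (fun _ => ⌈r⌉)).subset fun p hp => ?_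
  have hcoord (i : Fin d) : |(p i : ℝ)| ≤ ⌈r⌉ :=
    (abs_le_zNorm p i).trans (hp.trans (Int.le_ceil r))
  refine ⟨fun i => ?_, fun i => ?_⟩
  · exact_mod_cast (abs_le.1 (hcoord i)).1
  · exact_mod_cast (abs_le.1 (hcoord i)).2

lemma chi_mem_unitInterval {d : ℕ} (pF : ℝ) (p : Fin d → ℤ) : chi pF p ∈ unitInterval := by
  unfold chi; split_ifs <;> simp

lemma chiP_mem_unitInterval {d : ℕ} (pF : ℝ) (p : Fin d → ℤ) : chiP pF p ∈ unitInterval :=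
  Set.Icc.one_sub_mem (chi_mem_unitInterval pF p)

lemma collisionKernel_nonneg {d : ℕ} (pF : ℝ) (Vh : (Fin d → ℤ) → ℝ)
    (p₁ p₂ p₃ p₄ : Fin d → ℤ) :
    0 ≤ collisionKernel pF Vh p₁ p₂ p₃ p₄ := by
  have hχ (p : Fin d → ℤ) := (chi_mem_unitInterval pF p).1
  have hχP (p : Fin d → ℤ) := (chiP_mem_unitInterval pF p).1
  have := hχ p₁; have := hχ p₂; have := hχ p₃; have := hχ p₄
  have := hχP p₁; have := hχP p₂; have := hχP p₃; have := hχP p₄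
  unfold collisionKernel
  positivity

lemma collisionKernel_le {d : ℕ} (pF : ℝ) {Vh : (Fin d → ℤ) → ℝ} {M : ℝ}
    {B : Finset (Fin d → ℤ)} (hVM : ∀ k, Vh k ^ 2 ≤ M) (hVB : ∀ k ∉ B, Vh k = 0)
    (p₁ p₂ p₃ p₄ : Fin d → ℤ) :
    collisionKernel pF Vh p₁ p₂ p₃ p₄ ≤ 4 * M *
      ((if p₁ + p₂ = p₃ + p₄ ∧ p₁ - p₄ ∈ B then 1 else 0)
        + (if p₁ + p₂ = p₃ + p₄ ∧ p₁ - p₃ ∈ B then 1 else 0)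
        + (if p₁ - p₂ = p₃ - p₄ ∧ p₁ - p₃ ∈ B then 1 else 0)) := by
  have hsq (k) : Vh k ^ 2 ≤ M * if k ∈ B then 1 else 0 := by
    split_ifs with hk
    · simpa using hVM k
    · simp [hVB k hk]
  have hχ := chi_mem_unitInterval pF (d := d)
  have hχP := chiP_mem_unitInterval pF (d := d)
  obtain ⟨hc₁₀, hc₁₁⟩ := prod4_mem_unitInterval (hχ p₁) (hχ p₂) (hχ p₃) (hχ p₄)
  obtain ⟨hc₂₀, hc₂₁⟩ := prod4_mem_unitInterval (hχP p₁) (hχP p₂) (hχP p₃) (hχP p₄)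
  obtain ⟨hc₃₀, hc₃₁⟩ := prod4_mem_unitInterval (hχ p₁) (hχ p₃) (hχP p₂) (hχP p₄)
  obtain ⟨hc₄₀, hc₄₁⟩ := prod4_mem_unitInterval (hχP p₁) (hχP p₃) (hχ p₂) (hχ p₄)
  set a := Vh (p₁ - p₄)
  set b := Vh (p₁ - p₃)
  have hfirst : (chi pF p₁ * chi pF p₂ * chi pF p₃ * chi pF p₄
      + chiP pF p₁ * chiP pF p₂ * chiP pF p₃ * chiP pF p₄) * (a - b) ^ 2
      ≤ 4 * a ^ 2 + 4 * b ^ 2 := by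
    nlinarith [sq_nonneg (a + b),
      mul_le_mul_of_nonneg_right (add_le_add hc₁₁ hc₂₁) (sq_nonneg (a - b))]
  have hsecond : (chi pF p₁ * chi pF p₃ * chiP pF p₂ * chiP pF p₄
      + chiP pF p₁ * chiP pF p₃ * chi pF p₂ * chi pF p₄) * b ^ 2 ≤ 2 * b ^ 2 := by
    nlinarith [mul_le_mul_of_nonneg_right (add_le_add hc₃₁ hc₄₁) (sq_nonneg b)]
  have ha := hsq (p₁ - p₄)
  have hb := hsq (p₁ - p₃)
  unfold collisionKernel
  simp only [ite_and]
  split_ifs at ha hb ⊢ <;> nlinarith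

noncomputable def collisionIntegrand {d : ℕ} (pF : ℝ) (Vh f : (Fin d → ℤ) → ℝ)
    (p p₂ p₃ p₄ : Fin d → ℤ) : ℝ :=
  collisionKernel pF Vh p p₂ p₃ p₄ * (1 / (2 * π)) *
    (if freeDisp pF p + freeDisp pF p₂ - freeDisp pF p₃ - freeDisp pF p₄ = 0 then 1 else 0) *
    (f p₃ * f p₄ * (1 - f p) * (1 - f p₂) - f p * f p₂ * (1 - f p₃) * (1 - f p₄))

lemma abs_collisionIntegrand_le {d : ℕ} (pF : ℝ) {Vh f : (Fin d → ℤ) → ℝ} {M : ℝ}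
    {B : Finset (Fin d → ℤ)} (hVM : ∀ k, Vh k ^ 2 ≤ M) (hVB : ∀ k ∉ B, Vh k = 0)
    (hf : ∀ q, f q ∈ unitInterval) (p p₂ p₃ p₄ : Fin d → ℤ) :
    |collisionIntegrand pF Vh f p p₂ p₃ p₄| ≤ 4 * M *
      (transferMajorant B f p p₂ p₃ p₄ + transferMajorant B f p p₂ p₄ p₃
        + transferMajorant B f p p₄ p₂ p₃) := by
  set br := f p₃ * f p₄ * (1 - f p) * (1 - f p₂) - f p * f p₂ * (1 - f p₃) * (1 - f p₄)
  have hbr : |br| ≤ min (f p₃) (f p₄) + f p₂ :=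
    abs_gain_sub_loss_le (hf p) (hf p₂) (hf p₃) (hf p₄)
  have hM : 0 ≤ M := (sq_nonneg _).trans (hVM 0)
  have hw : 1 / (2 * π) *
      (if freeDisp pF p + freeDisp pF p₂ - freeDisp pF p₃ - freeDisp pF p₄ = 0 then 1 else 0)
      ∈ unitInterval := by
    refine unitInterval.mul_mem ⟨by positivity, ?_⟩ (by split_ifs <;> simp)
    rw [div_le_one (by positivity)]
    linarith [Real.pi_gt_three]
  have hind {P Q : Prop} [Decidable P] [Decidable Q] (hPQ : P ↔ Q) {g : ℝ} (hg : |br| ≤ g) :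
      (if P then 1 else 0) * |br| ≤ if Q then g else 0 := by
    simp only [hPQ]
    split_ifs <;> simp [hg]
  calc |collisionIntegrand pF Vh f p p₂ p₃ p₄|
      = collisionKernel pF Vh p p₂ p₃ p₄ * (1 / (2 * π) *
          (if freeDisp pF p + freeDisp pF p₂ - freeDisp pF p₃ - freeDisp pF p₄ = 0 then 1 else 0))
          * |br| := by
        rw [collisionIntegrand, abs_mul, mul_assoc _ (1 / (2 * π)), abs_of_nonneg
          (mul_nonneg (collisionKernel_nonneg pF Vh p p₂ p₃ p₄) hw.1)]
    _ ≤ collisionKernel pF Vh p p₂ p₃ p₄ * |br| := by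
        gcongr
        exact mul_le_of_le_one_right (collisionKernel_nonneg pF Vh p p₂ p₃ p₄) hw.2
    _ ≤ 4 * M * ((if p + p₂ = p₃ + p₄ ∧ p - p₄ ∈ B then 1 else 0)
          + (if p + p₂ = p₃ + p₄ ∧ p - p₃ ∈ B then 1 else 0)
          + (if p - p₂ = p₃ - p₄ ∧ p - p₃ ∈ B then 1 else 0)) * |br| := by
        gcongr
        exact collisionKernel_le pF hVM hVB p p₂ p₃ p₄
    _ ≤ 4 * M * (transferMajorant B f p p₂ p₃ p₄ + transferMajorant B f p p₂ p₄ p₃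
          + transferMajorant B f p p₄ p₂ p₃) := by
        rw [mul_assoc, add_mul, add_mul]
        gcongr
        · exact hind Iff.rfl (by linarith [min_le_left (f p₃) (f p₄)])
        · exact hind (by rw [add_comm p₄ p₃]) (by linarith [min_le_right (f p₃) (f p₄)])
        · exact hind (by rw [sub_eq_sub_iff_add_eq_add, add_comm p₃ p₂])
            (by linarith [min_le_right (f p₃) (f p₄)])

local notation "ℤ³" => Fin 3 → ℤ

lemma abs_Qop_le (pF : ℝ) {Vh f : ℤ³ → ℝ} {M : ℝ} {B : Finset ℤ³}
    (hVM : ∀ k, Vh k ^ 2 ≤ M) (hVB : ∀ k ∉ B, Vh k = 0) (hf : ∀ q, f q ∈ unitInterval)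
    (hfs : Summable f) (p : ℤ³) :
    |Qop pF Vh f p| ≤ 4 * π * ((2 * π) ^ 9)⁻¹ * (24 * M * B.card) * ∑' q, f q := by
  set S := ∑' q, f q
  set T := transferMajorant B f p
  have hT := hasSum_transferMajorant B (fun q => (hf q).1) hfs p
  have hmaj : HasSum (fun x : ℤ³ × ℤ³ × ℤ³ =>
      4 * M * (T x.1 x.2.1 x.2.2 + T x.1 x.2.2 x.2.1 + T x.2.2 x.1 x.2.1))
      (24 * M * B.card * S) := by
    have h₂ := ((Equiv.refl _).prodCongr (Equiv.prodComm _ _)).hasSum_iff.2 hT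
    have h₃ := ((Equiv.prodComm _ _).trans (Equiv.prodAssoc _ _ _)).symm.hasSum_iff.2 hT
    have hsum : 4 * M * (2 * B.card * S + 2 * B.card * S + 2 * B.card * S)
        = 24 * M * B.card * S := by ring
    exact hsum ▸ ((hT.add h₂).add h₃).mul_left (4 * M)
  have hbound (x : ℤ³ × ℤ³ × ℤ³) :
      ‖collisionIntegrand pF Vh f p x.1 x.2.1 x.2.2‖ ≤
        4 * M * (T x.1 x.2.1 x.2.2 + T x.1 x.2.2 x.2.1 + T x.2.2 x.1 x.2.1) :=
    abs_collisionIntegrand_le pF hVM hVB hf p _ _ _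
  have hQ : Qop pF Vh f p = 4 * π * ((2 * π) ^ 9)⁻¹ *
      ∑' x : ℤ³ × ℤ³ × ℤ³, collisionIntegrand pF Vh f p x.1 x.2.1 x.2.2 := by
    rw [(Summable.of_norm_bounded hmaj.summable hbound).tsum_tsum_tsum]
    rfl
  have hc : 0 < 4 * π * ((2 * π) ^ 9)⁻¹ := by positivity
  rw [hQ, abs_mul, abs_of_pos hc, mul_assoc _ _ S]
  exact mul_le_mul_of_nonneg_left (tsum_of_norm_bounded hmaj hbound) hc.le

theorem stmt10_general (r : ℝ) (Vh : (Fin 3 → ℤ) → ℝ)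
    (hsupp : ∀ k, r < zNorm k → Vh k = 0) :
    ∃ C : ℝ, 0 < C ∧ ∀ pF : ℝ, 0 < pF → ∀ f : (Fin 3 → ℤ) → ℝ,
      (∀ p, 0 ≤ f p) → (∀ p, f p ≤ 1) → Summable f →
      ∀ p : Fin 3 → ℤ, |Qop pF Vh f p| ≤ C * ∑' q : Fin 3 → ℤ, f q := by
  obtain ⟨B, hVB⟩ : ∃ B : Finset (Fin 3 → ℤ), ∀ k ∉ B, Vh k = 0 :=
    ⟨(finite_setOf_zNorm_le 3 r).toFinset, fun k hk => hsupp k (by simpa using hk)⟩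
  set M := ∑ k ∈ B, Vh k ^ 2
  have hM : 0 ≤ M := Finset.sum_nonneg fun k _ => sq_nonneg (Vh k)
  have hVM (k) : Vh k ^ 2 ≤ M := by
    by_cases hk : k ∈ B
    · exact Finset.single_le_sum (fun j _ => sq_nonneg (Vh j)) hk
    · simpa [hVB k hk] using hM
  set C₀ := 4 * π * ((2 * π) ^ 9)⁻¹ * (24 * M * B.card)
  have hC₀ : 0 ≤ C₀ := by positivity
  refine ⟨C₀ + 1, by positivity, fun pF _ f hf0 hf1 hfs p => ?_⟩
  calc |Qop pF Vh f p|
      ≤ C₀ * ∑' q, f q := abs_Qop_le pF hVM hVB (fun q => ⟨hf0 q, hf1 q⟩) hfs p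
    _ ≤ (C₀ + 1) * ∑' q, f q := by
        gcongr
        exacts [tsum_nonneg hf0, le_add_of_nonneg_right zero_le_one]

/-- Upper bound for `𝒬`: for `r ≥ 1` and `V̂` supported in the ball of radius `r`, even,
with `V̂(0) = 0`, there is `C > 0` such that for every `p_F > 0` and every `f : ℤ³ → ℝ`
with `0 ≤ f ≤ 1` and `∑ f < ∞`, one has `sup_p |𝒬[f](p)| ≤ C·∑_p f(p)`. -/
theorem stmt10 (r : ℝ) (hr : 1 ≤ r) (Vh : (Fin 3 → ℤ) → ℝ)
    (hsupp : ∀ k, r < zNorm k → Vh k = 0) (hsymm : ∀ k, Vh (-k) = Vh k) (h0 : Vh 0 = 0) :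
    ∃ C : ℝ, 0 < C ∧ ∀ pF : ℝ, 0 < pF → ∀ f : (Fin 3 → ℤ) → ℝ,
      (∀ p, 0 ≤ f p) → (∀ p, f p ≤ 1) → Summable f →
      ∀ p : Fin 3 → ℤ, |Qop pF Vh f p| ≤ C * ∑' q : Fin 3 → ℤ, f q :=
  stmt10_general r Vh hsupp
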